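/- arXiv:2111.04229 — 3 statements merged into one kernel-verified Lean document; each statement's English description precedes it below -/
import Mathlib

section
/- There exists exactly one sequence p : ℕ → (Λ → ℂ) such that: each p n is discrete analytic on Λ, p 0 is identically 1, (p (n+1))(0) = 0 for all n, and δ_x(p (n+1)) = p n for all n. Moreover this sequence satisfies p 1 (z) = z for all z ∈ Λ. -/
open Complex

noncomputable section

/-- The Gaussian integer lattice Λ = ℤ + iℤ. -/
abbrev GI := GaussianInt

/-- The lattice element i. -/
def Ii : GI := ⟨0, 1⟩

/-- The difference operator δ_x. -/
def dx (f : GI → ℂ) : GI → ℂ := fun z => f (z + 1) - f z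

/-- The difference operator δ_y. -/
def dy (f : GI → ℂ) : GI → ℂ := fun z => f (z + Ii) - f z

/-- Discrete analyticity on the full lattice Λ. -/
def DA (f : GI → ℂ) : Prop :=
  ∀ z : GI, (f (z + 1 + Ii) - f z) / (1 + I) = (f (z + 1) - f (z + Ii)) / (1 - I)

/-- α₊ = (1+i)/2. -/
def ap : ℂ := (1 + I) / 2

/-- α₋ = (1−i)/2. -/
def am : ℂ := (1 - I) / 2

/-- The defining property of the standard basis of discrete analytic polynomials
z^(n): each is discrete analytic, p 0 ≡ 1, p (n+1) vanishes at 0, and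
δ_x (p (n+1)) = p n. -/

lemma one_add_I_ne : (1 + I) ≠ 0 := by
  intro h; have := congrArg Complex.im h; simp at this

lemma one_sub_I_ne : (1 - I) ≠ 0 := by
  intro h; have := congrArg Complex.im h; simp at this

lemma alg (a b c d : ℂ) (h : (d - a) * (1 - I) = (b - c) * (1 + I)) :
    c - a = ap * (b - a) - am * (d - c) := by
  unfold ap am; field_simp; linear_combination h

lemma alg2 (a b c d : ℂ) (h : c - a = ap * (b - a) - am * (d - c)) :
    (d - a) * (1 - I) = (b - c) * (1 + I) := by
  unfold ap am at h; linear_combination 2 * h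

lemma DA_iff (f : GI → ℂ) : DA f ↔ ∀ z, dy f z = ap * dx f z - am * dx f (z + Ii) := by
  have h1 : ∀ z : GI, z + 1 + Ii = z + Ii + 1 := fun z => by ring
  constructor
  · intro h z
    have hz := h z
    rw [div_eq_div_iff one_add_I_ne one_sub_I_ne, h1] at hz
    have := alg (f z) (f (z+1)) (f (z + Ii)) (f (z + Ii + 1)) hz
    simpa [dy, dx, h1] using this
  · intro h z
    have hz := h z
    simp only [dy, dx, h1] at hz
    rw [div_eq_div_iff one_add_I_ne one_sub_I_ne, h1]
    exact alg2 (f z) (f (z+1)) (f (z + Ii)) (f (z + Ii + 1)) hz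

lemma mk_add_one (a b : ℤ) : ((⟨a,b⟩ : GI) + 1) = ⟨a+1,b⟩ := by ext <;> simp
lemma mk_add_I (a b : ℤ) : ((⟨a,b⟩ : GI) + Ii) = ⟨a,b+1⟩ := by
  unfold Ii; ext <;> simp

/-- Extensionality from equal value at 0 and equal differences. -/
lemma ext_of_data {f g : GI → ℂ} (h0 : f 0 = g 0)
    (hx : ∀ z, dx f z = dx g z) (hy : ∀ z, dy f z = dy g z) : f = g := by
  have row : ∀ a : ℤ, f ⟨a, 0⟩ = g ⟨a, 0⟩ := by
    intro a
    induction a using Int.induction_on with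
    | zero => exact h0
    | succ a ih =>
      have := hx ⟨a, 0⟩
      simp only [dx, mk_add_one] at this
      linear_combination this + ih
    | pred a ih =>
      have := hx ⟨-a - 1, 0⟩
      simp only [dx, mk_add_one] at this
      rw [show (-(a:ℤ) - 1 + 1) = -a by ring] at this
      linear_combination ih - this
  have col : ∀ a b : ℤ, f ⟨a, b⟩ = g ⟨a, b⟩ := by
    intro a b
    induction b using Int.induction_on with
    | zero => exact row a
    | succ b ih =>
      have := hy ⟨a, b⟩
      simp only [dy, mk_add_I] at this
      linear_combination this + ih
    | pred b ih =>
      have := hy ⟨a, -b - 1⟩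
      simp only [dy, mk_add_I] at this
      rw [show (-(b:ℤ) - 1 + 1) = -b by ring] at this
      linear_combination ih - this
  funext z
  exact col z.re z.im

/-- Signed sum: isum t b = ∑_{0 ≤ k < b} t k for b ≥ 0, −∑_{b ≤ k < 0} t k for b < 0. -/
def isum (t : ℤ → ℂ) : ℤ → ℂ
  | Int.ofNat n => ∑ k ∈ Finset.range n, t k
  | Int.negSucc n => -∑ k ∈ Finset.range (n+1), t (Int.negSucc k)

lemma isum_zero (t : ℤ → ℂ) : isum t 0 = 0 := by simp [isum]

lemma isum_succ (t : ℤ → ℂ) (b : ℤ) : isum t (b + 1) = isum t b + t b := by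
  cases b with
  | ofNat n =>
    show isum t (Int.ofNat (n+1)) = _
    simp [isum, Finset.sum_range_succ]
  | negSucc n =>
    cases n with
    | zero =>
      show isum t (Int.ofNat 0) = _
      simp [isum]
    | succ m =>
      show isum t (Int.negSucc m) = _
      simp only [isum, Finset.sum_range_succ]
      ring

lemma isum_sub (t s u : ℤ → ℂ) (h : ∀ k, t k - s k = u (k+1) - u k) (b : ℤ) :
    isum t b - isum s b = u b - u 0 := by
  induction b using Int.induction_on with
  | zero => simp [isum_zero]
  | succ b ih =>
    rw [isum_succ, isum_succ]
    linear_combination ih + h b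
  | pred b ih =>
    have h1 := isum_succ t (-b - 1)
    have h2 := isum_succ s (-b - 1)
    rw [show (-(b:ℤ) - 1 + 1) = -b by ring] at h1 h2
    have h3 := h (-b - 1)
    rw [show (-(b:ℤ) - 1 + 1) = -b by ring] at h3
    linear_combination ih - h1 + h2 - h3

/-- From a DA function g, the "antiderivative" with dx = g, value 0 at 0. -/
def nxt (g : GI → ℂ) : GI → ℂ := fun z =>
  isum (fun k => g ⟨k, 0⟩) z.re
    + isum (fun k => ap * g ⟨z.re, k⟩ - am * g ⟨z.re, k+1⟩) z.im

lemma nxt_zero (g : GI → ℂ) : nxt g 0 = 0 := by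
  simp [nxt, isum_zero, show (0:GI).re = 0 from rfl, show (0:GI).im = 0 from rfl]

lemma nxt_dy (g : GI → ℂ) (z : GI) : dy (nxt g) z = ap * g z - am * g (z + Ii) := by
  obtain ⟨a, b⟩ := z
  simp only [dy, nxt, mk_add_I, isum_succ]
  ring

lemma nxt_dx (g : GI → ℂ) (hg : DA g) (z : GI) : dx (nxt g) z = g z := by
  have hg' := (DA_iff g).mp hg
  obtain ⟨a, b⟩ := z
  simp only [dx, nxt, mk_add_one, isum_succ]
  have key : isum (fun k => ap * g ⟨a+1, k⟩ - am * g ⟨a+1, k+1⟩) b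
      - isum (fun k => ap * g ⟨a, k⟩ - am * g ⟨a, k+1⟩) b
      = g ⟨a, b⟩ - g ⟨a, 0⟩ := by
    apply isum_sub
    intro k
    have := hg' ⟨a, k⟩
    simp only [dy, dx, mk_add_I, mk_add_one] at this
    linear_combination -this
  linear_combination key

lemma nxt_DA (g : GI → ℂ) (hg : DA g) : DA (nxt g) := by
  rw [DA_iff]
  intro z
  rw [nxt_dy, nxt_dx g hg, nxt_dx g hg]

/-- The sequence of discrete analytic polynomials. -/
def P : ℕ → GI → ℂ
  | 0 => fun _ => 1
  | n + 1 => nxt (P n)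

def IsStdBasis (p : ℕ → GI → ℂ) : Prop :=
  (∀ n, DA (p n)) ∧ (∀ z : GI, p 0 z = 1) ∧ (∀ n, p (n + 1) 0 = 0) ∧
    (∀ n, dx (p (n + 1)) = p n)

lemma P_DA : ∀ n, DA (P n) := by
  intro n
  induction n with
  | zero => intro z; simp [P]
  | succ n ih => exact nxt_DA _ ih

lemma P_basis : IsStdBasis P := by
  refine ⟨P_DA, fun z => rfl, fun n => nxt_zero _, fun n => ?_⟩
  funext z
  exact nxt_dx _ (P_DA n) z

lemma basis_unique {p q : ℕ → GI → ℂ} (hp : IsStdBasis p) (hq : IsStdBasis q) : p = q := by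
  obtain ⟨hpDA, hp0, hpz, hpx⟩ := hp
  obtain ⟨hqDA, hq0, hqz, hqx⟩ := hq
  funext n
  induction n with
  | zero => funext z; rw [hp0, hq0]
  | succ n ih =>
    apply ext_of_data
    · rw [hpz, hqz]
    · intro z
      rw [hpx, hqx, ih]
    · intro z
      have h1 := ((DA_iff _).mp (hpDA (n+1))) z
      have h2 := ((DA_iff _).mp (hqDA (n+1))) z
      rw [h1, h2, hpx, hqx, ih]

/-- there is exactly one sequence of discrete analytic functions p with
p 0 ≡ 1, p (n+1)(0) = 0 and δ_x (p (n+1)) = p n; and this sequence satisfies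
p 1 (z) = z for all z ∈ Λ. -/
theorem stmt5 :
    (∃! p : ℕ → GI → ℂ, IsStdBasis p) ∧
    (∀ p : ℕ → GI → ℂ, IsStdBasis p → ∀ z : GI, p 1 z = GaussianInt.toComplex z) := by
  constructor
  · exact ⟨P, P_basis, fun q hq => basis_unique hq P_basis⟩
  · intro p hp z
    obtain ⟨hpDA, hp0, hpz, hpx⟩ := hp
    have key : p 1 = fun z => GaussianInt.toComplex z := by
      apply ext_of_data
      · rw [hpz]; simp
      · intro z
        rw [hpx]
        simp only [dx]
        rw [hp0, map_add]
        simp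
      · intro z
        have h1 := ((DA_iff _).mp (hpDA 1)) z
        rw [h1, hpx, hp0, hp0]
        simp only [dy]
        rw [map_add]
        have : GaussianInt.toComplex Ii = I := by
          simp [Ii, GaussianInt.toComplex_def]
        rw [this]
        unfold ap am
        ring
    rw [key]
end
end

section
/- Let f : Λ₊ → ℂ be discrete analytic on Λ₊. Then pointwise on Λ₊: (I+α₋δ_x)((I+α₊δ_y)f) = f and (I+α₊δ_y)((I+α₋δ_x)f) = f; and (I+α₊δ_x)f = (I+δ_y)((I+α₋δ_x)f). Moreover each of the maps f ↦ (I+δ_y)f, f ↦ (I+α₊δ_y)f, f ↦ (I+α₊δ_x)f, f ↦ (I+α₋δ_x)f is a bijection of the space of ℂ-valued discrete analytic functions on Λ₊ onto itself. -/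
open Complex

noncomputable section

/-- The right half-lattice Λ₊ = {z ∈ Λ : Re z ≥ 0}. -/
def Lp := {z : GI // 0 ≤ z.re}

/-- The point 0 of Λ₊. -/
def pt0 : Lp := ⟨0, le_refl 0⟩

/-- The shift z ↦ z + 1 on Λ₊. -/
def shx (z : Lp) : Lp := ⟨z.1 + 1, by have := z.2; simp [Zsqrtd.re_add]; omega⟩

/-- The shift z ↦ z + i on Λ₊. -/
def shy (z : Lp) : Lp := ⟨z.1 + Ii, by have := z.2; simp [Zsqrtd.re_add, Ii]; omega⟩

/-- The difference operator δ_x on functions on Λ₊. -/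
def dxp (f : Lp → ℂ) : Lp → ℂ := fun z => f (shx z) - f z

/-- The difference operator δ_y on functions on Λ₊. -/
def dyp (f : Lp → ℂ) : Lp → ℂ := fun z => f (shy z) - f z

/-- Discrete analyticity on the right half-lattice Λ₊. -/
def DAp (f : Lp → ℂ) : Prop :=
  ∀ z : Lp, (f (shx (shy z)) - f z) / (1 + I) = (f (shx z) - f (shy z)) / (1 - I)

/-- `T` is a bijection of the space of ℂ-valued discrete analytic functions on Λ₊
onto itself. -/
def BijOnDAp (T : (Lp → ℂ) → (Lp → ℂ)) : Prop :=
  (∀ g, DAp g → DAp (T g)) ∧ ∀ h, DAp h → ∃! g : Lp → ℂ, DAp g ∧ T g = h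

/-! Discrete analyticity reads `f (z + 1 + i) - f z = i (f (z + 1) - f (z + i))`. This relation
is linear and invariant under the shifts `z ↦ z + 1`, `z ↦ z ± i` of `Λ₊`, so all four operators
preserve it. Since `α₋α₊ = ½`, on analytic functions
`(I + α₋δ_x)(I + α₊δ_y) = I + α₋δ_x + α₊δ_y + ½δ_xδ_y` collapses to `I`, and `δ_x`, `δ_y` commute,
so these two operators are mutually inverse. `I + δ_y` is translation by `i`, inverted by
translation by `-i` because `Λ₊` is stable under both, and `I + α₊δ_x = (I + δ_y)(I + α₋δ_x)` on
analytic functions is then a composition of bijections. -/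

def shyInv (z : Lp) : Lp := ⟨z.1 - Ii, by have := z.2; simp [Zsqrtd.re_sub, Ii]; omega⟩

def idAddDx (c : ℂ) (g : Lp → ℂ) : Lp → ℂ := fun z => g z + c * dxp g z

def idAddDy (c : ℂ) (g : Lp → ℂ) : Lp → ℂ := fun z => g z + c * dyp g z

lemma shy_shx (z : Lp) : shy (shx z) = shx (shy z) :=
  Subtype.ext (add_right_comm _ _ _)

lemma shy_shyInv (z : Lp) : shy (shyInv z) = z :=
  Subtype.ext (sub_add_cancel _ _)

lemma shyInv_shy (z : Lp) : shyInv (shy z) = z :=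
  Subtype.ext (add_sub_cancel_right _ _)

lemma shyInv_shx (z : Lp) : shyInv (shx z) = shx (shyInv z) :=
  Subtype.ext (sub_add_eq_add_sub _ _ _).symm

lemma add_dyp_apply (g : Lp → ℂ) (z : Lp) : g z + dyp g z = g (shy z) :=
  add_sub_cancel _ _

lemma idAddDx_idAddDy_comm (a b : ℂ) (f : Lp → ℂ) :
    idAddDx a (idAddDy b f) = idAddDy b (idAddDx a f) := funext fun z => by
  simp only [idAddDx, idAddDy, dxp, dyp, shy_shx]
  ring

namespace DAp

variable {f g : Lp → ℂ}

lemma apply_shx_shy (hf : DAp f) (z : Lp) :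
    f (shx (shy z)) = f z + I * (f (shx z) - f (shy z)) := by
  have h := hf z
  rw [div_eq_div_iff (by simp [Complex.ext_iff]) (by simp [Complex.ext_iff])] at h
  linear_combination ((1 + I) / 2) * h +
    ((f (shx (shy z)) - f z + f (shx z) - f (shy z)) / 2) * I_sq

lemma add_const_mul (hf : DAp f) (hg : DAp g) (c : ℂ) : DAp (fun z => f z + c * g z) :=
  fun z => by linear_combination hf z + c * hg z

lemma dxp (hf : DAp f) : DAp (dxp f) := fun z => by
  have h := hf (shx z)
  simp only [_root_.dxp, shy_shx] at h ⊢
  linear_combination h - hf z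

lemma dyp (hf : DAp f) : DAp (dyp f) := fun z => by
  have h := hf (shy z)
  simp only [_root_.dyp, shy_shx] at h ⊢
  linear_combination h - hf z

lemma idAddDx (hf : DAp f) (c : ℂ) : DAp (idAddDx c f) := hf.add_const_mul hf.dxp c

lemma idAddDy (hf : DAp f) (c : ℂ) : DAp (idAddDy c f) := hf.add_const_mul hf.dyp c

lemma comp_shy (hf : DAp f) : DAp (f ∘ shy) := fun z => by
  simpa only [Function.comp, shy_shx] using hf (shy z)

lemma comp_shyInv (hf : DAp f) : DAp (f ∘ shyInv) := fun z => by
  simpa only [Function.comp, shyInv_shx, shyInv_shy, shy_shyInv] using hf (shyInv z)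

end DAp

section Operators

variable {f : Lp → ℂ}

lemma idAddDx_am_idAddDy_ap (hf : DAp f) : idAddDx am (idAddDy ap f) = f := funext fun z => by
  simp only [idAddDx, idAddDy, dxp, dyp, shy_shx, ap, am]
  linear_combination ((1 - I) / 2 * ((1 + I) / 2)) * hf.apply_shx_shy z +
    (-f z / 2 + (1 + I) / 4 * f (shy z) + (1 - I) / 4 * f (shx z)) * I_sq

lemma idAddDy_ap_idAddDx_am (hf : DAp f) : idAddDy ap (idAddDx am f) = f :=
  (idAddDx_idAddDy_comm am ap f).symm.trans (idAddDx_am_idAddDy_ap hf)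

lemma idAddDx_ap_eq_comp_shy (hf : DAp f) : idAddDx ap f = idAddDx am f ∘ shy := by
  funext z
  simp only [Function.comp, idAddDx, dxp, ap, am]
  linear_combination (-(1 - I) / 2) * hf.apply_shx_shy z + ((f (shx z) - f (shy z)) / 2) * I_sq

end Operators

lemma bijOnDAp_of_bijOn {T : (Lp → ℂ) → Lp → ℂ}
    (hT : Set.BijOn T {g | DAp g} {g | DAp g}) : BijOnDAp T :=
  ⟨hT.mapsTo, fun _ hh => by
    obtain ⟨g, hg, rfl⟩ := hT.surjOn hh
    exact ⟨g, ⟨hg, rfl⟩, fun _ ⟨hg', hT'⟩ => hT.injOn hg' hg hT'⟩⟩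

lemma bijOn_comp_shy : Set.BijOn (· ∘ shy) {g | DAp g} {g | DAp g} :=
  Set.InvOn.bijOn (f' := (· ∘ shyInv))
    ⟨fun g _ => funext fun z => congrArg g (shy_shyInv z),
      fun g _ => funext fun z => congrArg g (shyInv_shy z)⟩
    (fun _ hg => DAp.comp_shy hg) (fun _ hg => DAp.comp_shyInv hg)

lemma invOn_idAddDx_am_idAddDy_ap :
    Set.InvOn (idAddDx am) (idAddDy ap) {g | DAp g} {g | DAp g} :=
  ⟨fun _ hg => idAddDx_am_idAddDy_ap hg, fun _ hg => idAddDy_ap_idAddDx_am hg⟩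

lemma bijOn_idAddDy_ap : Set.BijOn (idAddDy ap) {g | DAp g} {g | DAp g} :=
  invOn_idAddDx_am_idAddDy_ap.bijOn (fun _ hg => DAp.idAddDy hg ap)
    (fun _ hg => DAp.idAddDx hg am)

lemma bijOn_idAddDx_am : Set.BijOn (idAddDx am) {g | DAp g} {g | DAp g} :=
  invOn_idAddDx_am_idAddDy_ap.symm.bijOn (fun _ hg => DAp.idAddDx hg am)
    (fun _ hg => DAp.idAddDy hg ap)

lemma bijOn_idAddDx_ap : Set.BijOn (idAddDx ap) {g | DAp g} {g | DAp g} :=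
  (bijOn_comp_shy.comp bijOn_idAddDx_am).congr fun _ hg => (idAddDx_ap_eq_comp_shy hg).symm

/-- for discrete analytic f on Λ₊, pointwise
`(I+α₋δ_x)((I+α₊δ_y)f) = f`, `(I+α₊δ_y)((I+α₋δ_x)f) = f`, and
`(I+α₊δ_x)f = (I+δ_y)((I+α₋δ_x)f)`; and the operators `I+δ_y`, `I+α₊δ_y`,
`I+α₊δ_x`, `I+α₋δ_x` are bijections of the space of discrete analytic functions
on Λ₊ onto itself. -/
theorem stmt10 (f : Lp → ℂ) (hf : DAp f) :
    (∀ z : Lp,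
      (fun w => f w + ap * dyp f w) z + am * dxp (fun w => f w + ap * dyp f w) z
        = f z) ∧
    (∀ z : Lp,
      (fun w => f w + am * dxp f w) z + ap * dyp (fun w => f w + am * dxp f w) z
        = f z) ∧
    (∀ z : Lp,
      f z + ap * dxp f z
        = (fun w => f w + am * dxp f w) z + dyp (fun w => f w + am * dxp f w) z) ∧
    BijOnDAp (fun g z => g z + dyp g z) ∧
    BijOnDAp (fun g z => g z + ap * dyp g z) ∧
    BijOnDAp (fun g z => g z + ap * dxp g z) ∧
    BijOnDAp (fun g z => g z + am * dxp g z) := by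
  refine ⟨congrFun (idAddDx_am_idAddDy_ap hf), congrFun (idAddDy_ap_idAddDx_am hf),
    fun z => ?_, bijOnDAp_of_bijOn ?_, bijOnDAp_of_bijOn bijOn_idAddDy_ap,
    bijOnDAp_of_bijOn bijOn_idAddDx_ap, bijOnDAp_of_bijOn bijOn_idAddDx_am⟩
  · exact (congrFun (idAddDx_ap_eq_comp_shy hf) z).trans (add_dyp_apply _ z).symm
  · exact bijOn_comp_shy.congr fun g _ => funext fun z => (add_dyp_apply g z).symm
end
end

section
/- Let V be a complex normed vector space, let f : Λ₊ → V be discrete analytic on Λ₊, and let g : ℕ → (Λ₊ → V) satisfy: g 0 = f, and for each n, g (n+1) is discrete analytic on Λ₊ with (g (n+1))(0) = 0 and δ_x(g (n+1)) = g n (so g n = Zⁿ f for the primitive operator Z). Then for every z ∈ Λ₊, ‖(g n)(z)‖ → 0 as n → ∞. -/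
open Complex

noncomputable section

/-- The difference operator δ_x on V-valued functions on Λ₊. -/
def dxV {V : Type*} [AddCommGroup V] (f : Lp → V) : Lp → V := fun z => f (shx z) - f z

/-- Discrete analyticity on Λ₊ for functions with values in a complex vector
space: (f(z+1+i) − f(z))/(1+i) = (f(z+1) − f(z+i))/(1−i). -/
def DApV {V : Type*} [AddCommGroup V] [Module ℂ V] (f : Lp → V) : Prop :=
  ∀ z : Lp, ((1 + I)⁻¹ : ℂ) • (f (shx (shy z)) - f z)
    = ((1 - I)⁻¹ : ℂ) • (f (shx z) - f (shy z))

/-!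
The relation `δ_x (g (n+1)) = g n` gives `g (n+1) (z+1) = g (n+1) z + g n z`,
and together with discrete analyticity of `g (n+1)` it gives
`g (n+1) (z+i) = g (n+1) z + α₊ g n z - α₋ g n (z+i)`. As `g (n+1) 0 = 0` and
`|α₊| = |α₋| = r := 1/√2`, induction on `k` along the imaginary axis gives
`‖g n (±k i)‖ ≤ C (n+1)^k rⁿ → 0`, and the horizontal relation carries the limit to `Re z > 0`.
-/

open Filter Topology

lemma tendsto_const_mul_poly_mul_pow {r : ℝ} (hr₀ : 0 < r) (hr₁ : r < 1) (C : ℝ) (k : ℕ) :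
    Tendsto (fun n : ℕ => C * ((n : ℝ) + 1) ^ k * r ^ n) atTop (𝓝 0) := by
  have hshift := (tendsto_pow_const_mul_const_pow_of_lt_one k hr₀.le hr₁).comp
    (tendsto_add_atTop_nat 1)
  convert hshift.const_mul (C / r) using 1
  · ext n
    simp only [Function.comp, Nat.cast_add_one, pow_succ]
    field_simp
  · simp

lemma le_poly_mul_pow_of_le_rec {a b : ℕ → ℝ} {C r : ℝ} {k : ℕ} (hr : 0 ≤ r) (hC : 0 ≤ C)
    (ha₀ : 0 ≤ a 0) (hb : ∀ n, b n ≤ C * ((n : ℝ) + 1) ^ k * r ^ n)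
    (hrec : ∀ n, a (n + 1) ≤ b (n + 1) + r * b n + r * a n) (n : ℕ) :
    a n ≤ (a 0 + 2 * C) * ((n : ℝ) + 1) ^ (k + 1) * r ^ n := by
  induction n with
  | zero =>
    simp only [Nat.cast_zero, zero_add, one_pow, pow_zero, mul_one]
    linarith
  | succ n ih =>
    set m : ℝ := (n : ℝ) + 1
    have hm : (0 : ℝ) ≤ m := by positivity
    have hmono : m ^ k ≤ (m + 1) ^ k := pow_le_pow_left₀ hm (by linarith) k
    have hb₁ : b (n + 1) ≤ C * (m + 1) ^ k * r ^ (n + 1) := by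
      simpa [m, Nat.cast_add_one] using hb (n + 1)
    have key : C * (m + 1) ^ k + C * m ^ k + (a 0 + 2 * C) * m ^ (k + 1)
        ≤ (a 0 + 2 * C) * (m + 1) ^ (k + 1) := by
      have h₁ : m ^ (k + 1) ≤ (m + 1) ^ k * m := by
        rw [pow_succ]; exact mul_le_mul_of_nonneg_right hmono hm
      have e : (m + 1) ^ (k + 1) = (m + 1) ^ k * m + (m + 1) ^ k := by ring
      rw [e]
      nlinarith [mul_le_mul_of_nonneg_left h₁ (by linarith : 0 ≤ a 0 + 2 * C),
        mul_le_mul_of_nonneg_left hmono hC, mul_nonneg ha₀ (pow_nonneg (by linarith : 0 ≤ m + 1) k)]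
    calc a (n + 1) ≤ b (n + 1) + r * b n + r * a n := hrec n
      _ ≤ C * (m + 1) ^ k * r ^ (n + 1) + r * (C * m ^ k * r ^ n)
          + r * ((a 0 + 2 * C) * m ^ (k + 1) * r ^ n) := by
        gcongr
        exact hb n
      _ = (C * (m + 1) ^ k + C * m ^ k + (a 0 + 2 * C) * m ^ (k + 1)) * r ^ (n + 1) := by ring
      _ ≤ (a 0 + 2 * C) * (m + 1) ^ (k + 1) * r ^ (n + 1) := by gcongr
      _ = (a 0 + 2 * C) * (((n + 1 : ℕ) : ℝ) + 1) ^ (k + 1) * r ^ (n + 1) := by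
        simp [m, Nat.cast_add_one]

section Chains

variable {𝕜 V : Type*} [NormedField 𝕜] [NormedAddCommGroup V] [NormedSpace 𝕜 V]

lemma exists_norm_le_poly_mul_pow_of_rec {h : ℕ → ℕ → V} {c₁ c₂ : 𝕜} {r : ℝ} (hr : 0 ≤ r)
    (hc₁ : ‖c₁‖ ≤ r) (hc₂ : ‖c₂‖ ≤ r) (h₀ : ∀ n, h (n + 1) 0 = 0)
    (hrec : ∀ n k, h (n + 1) (k + 1) = h (n + 1) k + c₁ • h n k + c₂ • h n (k + 1)) (k : ℕ) :
    ∃ C, ∀ n, ‖h n k‖ ≤ C * ((n : ℝ) + 1) ^ k * r ^ n := by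
  induction k with
  | zero =>
    refine ⟨‖h 0 0‖, fun n => ?_⟩
    cases n with
    | zero => simp
    | succ n => rw [h₀, norm_zero]; positivity
  | succ k ih =>
    obtain ⟨C, hC⟩ := ih
    have hC₀ : 0 ≤ C := by simpa using (norm_nonneg _).trans (hC 0)
    refine ⟨_, le_poly_mul_pow_of_le_rec hr hC₀ (norm_nonneg _) hC (fun n => ?_)⟩
    calc ‖h (n + 1) (k + 1)‖
        ≤ ‖h (n + 1) k‖ + ‖c₁ • h n k‖ + ‖c₂ • h n (k + 1)‖ := by rw [hrec]; exact norm_add₃_le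
      _ ≤ ‖h (n + 1) k‖ + r * ‖h n k‖ + r * ‖h n (k + 1)‖ := by
        rw [norm_smul, norm_smul]; gcongr

lemma tendsto_zero_of_rec {h : ℕ → ℕ → V} {c₁ c₂ : 𝕜} {r : ℝ} (hr₀ : 0 < r) (hr₁ : r < 1)
    (hc₁ : ‖c₁‖ ≤ r) (hc₂ : ‖c₂‖ ≤ r) (h₀ : ∀ n, h (n + 1) 0 = 0)
    (hrec : ∀ n k, h (n + 1) (k + 1) = h (n + 1) k + c₁ • h n k + c₂ • h n (k + 1)) (k : ℕ) :
    Tendsto (fun n => h n k) atTop (𝓝 0) := by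
  obtain ⟨C, hC⟩ := exists_norm_le_poly_mul_pow_of_rec hr₀.le hc₁ hc₂ h₀ hrec k
  exact squeeze_zero_norm hC (tendsto_const_mul_poly_mul_pow hr₀ hr₁ C k)

end Chains

def latPt (x : ℕ) (y : ℤ) : Lp := ⟨⟨x, y⟩, Int.natCast_nonneg x⟩

lemma shx_latPt (x : ℕ) (y : ℤ) : shx (latPt x y) = latPt (x + 1) y := by
  apply Subtype.ext
  show (⟨x, y⟩ : GI) + 1 = ⟨((x + 1 : ℕ) : ℤ), y⟩
  simp [Zsqrtd.ext_iff]

lemma shy_latPt (x : ℕ) (y : ℤ) : shy (latPt x y) = latPt x (y + 1) := by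
  apply Subtype.ext
  show (⟨x, y⟩ : GI) + Ii = ⟨x, y + 1⟩
  simp [Ii]

lemma exists_eq_latPt (z : Lp) : ∃ x y, z = latPt x y := by
  obtain ⟨⟨a, b⟩, ha⟩ := z
  lift a to ℕ using ha
  exact ⟨a, b, rfl⟩

lemma norm_am_sq : ‖am‖ ^ 2 = 2⁻¹ := by
  rw [Complex.sq_norm, am, Complex.normSq_div, Complex.normSq_apply]
  norm_num

lemma norm_ap : ‖ap‖ = ‖am‖ := by
  rw [← RCLike.norm_conj, ap, am, map_div₀]
  simp [sub_eq_add_neg]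

lemma norm_am_pos : 0 < ‖am‖ := by
  nlinarith [norm_am_sq, norm_nonneg am]

lemma norm_am_lt_one : ‖am‖ < 1 := by
  nlinarith [norm_am_sq, norm_nonneg am]

section Recurrences

variable {V : Type*} [AddCommGroup V] {F G : Lp → V}

lemma shx_eq_add_of_dxV_eq (h : dxV F = G) (z : Lp) : F (shx z) = F z + G z := by
  rw [← h, dxV]
  abel

lemma shy_eq_of_DApV [Module ℂ V] (hF : DApV F) (h : dxV F = G) (z : Lp) :
    F (shy z) = F z + ap • G z - am • G (shy z) := by
  have hda := hF z
  rw [shx_eq_add_of_dxV_eq h (shy z), shx_eq_add_of_dxV_eq h z] at hda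
  have e₁ : ((1 + I : ℂ))⁻¹ = am :=
    (eq_inv_of_mul_eq_one_left (by simp only [am]; linear_combination (-1/2 : ℂ) * I_sq)).symm
  have e₂ : ((1 - I : ℂ))⁻¹ = ap :=
    (eq_inv_of_mul_eq_one_left (by simp only [ap]; linear_combination (-1/2 : ℂ) * I_sq)).symm
  rw [e₁, e₂] at hda
  simp only [ap, am] at hda ⊢
  linear_combination (norm := module) hda

end Recurrences

lemma tendsto_zero_on_imAxis {V : Type*} [NormedAddCommGroup V] [NormedSpace ℂ V]
    {g : ℕ → Lp → V}
    (hy : ∀ n z, g (n + 1) (shy z) = g (n + 1) z + ap • g n z - am • g n (shy z))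
    (h₀ : ∀ n, g (n + 1) pt0 = 0) (y : ℤ) :
    Tendsto (fun n => g n (latPt 0 y)) atTop (𝓝 0) := by
  have hr₀ := norm_am_pos
  have hr₁ := norm_am_lt_one
  rcases Int.eq_nat_or_neg y with ⟨k, rfl | rfl⟩
  · refine tendsto_zero_of_rec (h := fun n k : ℕ => g n (latPt 0 k)) hr₀ hr₁ norm_ap.le
      (norm_neg am).le h₀ (fun n j => ?_) k
    simp only [Nat.cast_add_one, ← shy_latPt, hy, neg_smul]
    abel
  · refine tendsto_zero_of_rec (h := fun n k : ℕ => g n (latPt 0 (-k))) hr₀ hr₁ le_rfl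
      (by rw [norm_neg, norm_ap]) h₀ (fun n j => ?_) k
    have hj : latPt 0 (-j) = shy (latPt 0 (-(j + 1 : ℕ))) := by
      rw [shy_latPt]; push_cast; ring_nf
    simp only [hj, hy, neg_smul]
    abel

lemma tendsto_zero_shx {M : Type*} [AddCommMonoid M] [TopologicalSpace M] [ContinuousAdd M]
    {g : ℕ → Lp → M} (hx : ∀ n z, g (n + 1) (shx z) = g (n + 1) z + g n z) {z : Lp}
    (hz : Tendsto (fun n => g n z) atTop (𝓝 0)) :
    Tendsto (fun n => g n (shx z)) atTop (𝓝 0) := by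
  rw [← tendsto_add_atTop_iff_nat 1]
  simpa only [hx, add_zero] using ((tendsto_add_atTop_iff_nat 1).mpr hz).add hz

theorem stmt12_general (V : Type*) [NormedAddCommGroup V] [NormedSpace ℂ V]
    (g : ℕ → Lp → V)
    (hgDA : ∀ n, DApV (g (n + 1)))
    (hgz : ∀ n, g (n + 1) pt0 = 0)
    (hgd : ∀ n, dxV (g (n + 1)) = g n) :
    ∀ z : Lp, Filter.Tendsto (fun n => ‖g n z‖) Filter.atTop (nhds 0) := by
  have hx n := shx_eq_add_of_dxV_eq (hgd n)
  have hy n := shy_eq_of_DApV (hgDA n) (hgd n)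
  intro z
  obtain ⟨x, y, rfl⟩ := exists_eq_latPt z
  refine tendsto_zero_iff_norm_tendsto_zero.mp ?_
  induction x with
  | zero => exact tendsto_zero_on_imAxis hy hgz y
  | succ x ih => simpa only [shx_latPt] using tendsto_zero_shx hx ih

/-- if f is discrete analytic on Λ₊ with values in a complex normed
vector space and g n = Zⁿ f (iterated primitives of f vanishing at 0), then
‖(Zⁿ f)(z)‖ → 0 for every z ∈ Λ₊. -/
theorem stmt12 (V : Type*) [NormedAddCommGroup V] [NormedSpace ℂ V]
    (f : Lp → V) (hf : DApV f) (g : ℕ → Lp → V)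
    (hg0 : g 0 = f)
    (hgDA : ∀ n, DApV (g (n + 1)))
    (hgz : ∀ n, g (n + 1) pt0 = 0)
    (hgd : ∀ n, dxV (g (n + 1)) = g n) :
    ∀ z : Lp, Filter.Tendsto (fun n => ‖g n z‖) Filter.atTop (nhds 0) :=
  stmt12_general V g hgDA hgz hgd
end
end
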